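/- Let D be a self-adjoint operator on H and a ∈ B(H) weakly D-differentiable. Then for ξ, η ∈ dom(D) the function g(t) := ⟨(α_t(a) − a) ξ, η⟩ is differentiable at every t ∈ ℝ with g'(t) = i⟨wD(a) e^{-itD} ξ, e^{-itD} η⟩, and consequently |⟨(α_t(a) − a)ξ, η⟩| ≤ |t| ‖wD(a)‖ ‖ξ‖ ‖η‖. -/

import Mathlib

open Complex Filter Topology MeasureTheory
open scoped Topology

local notation "⟪" x ", " y "⟫" => @inner ℂ _ _ x y

variable {H : Type*} [NormedAddCommGroup H] [InnerProductSpace ℂ H] [CompleteSpace H]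

/-- `b` is the bounded operator implementing the commutator form
`(ξ, η) ↦ ⟨aξ, Dη⟩ − ⟨aDξ, η⟩` on `dom D × dom D`; i.e. `a` is weakly `D`-differentiable
with derivative `wD(a) = b`. -/
def IsWeakDeriv (D : H →ₗ.[ℂ] H) (a b : H →L[ℂ] H) : Prop :=
  ∀ ξ η : D.domain, ⟪b (ξ : H), (η : H)⟫ = ⟪a (ξ : H), D η⟫ - ⟪a (D ξ), (η : H)⟫

/-- `conjAd U t a = U t ∘ a ∘ U (−t)`, i.e. `α_t(a) = e^{itD} a e^{-itD}`. -/
noncomputable def conjAd (U : ℝ → H →L[ℂ] H) (t : ℝ) (a : H →L[ℂ] H) : H →L[ℂ] H :=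
  (U t).comp (a.comp (U (-t)))

/-- `U` is the strongly continuous one-parameter unitary group `t ↦ e^{itD}`
generated by the self-adjoint operator `D` (Stone's theorem characterization). -/
structure IsStoneGroupOf (D : H →ₗ.[ℂ] H) (U : ℝ → H →L[ℂ] H) : Prop where
  map_zero : U 0 = 1
  map_add : ∀ s t : ℝ, U (s + t) = (U s).comp (U t)
  isometry : ∀ (t : ℝ) (ξ : H), ‖U t ξ‖ = ‖ξ‖
  hasDerivAt : ∀ ξ : D.domain, HasDerivAt (fun t : ℝ => U t (ξ : H)) (Complex.I • D ξ) 0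
  mem_domain : ∀ ξ v : H, HasDerivAt (fun t : ℝ => U t ξ) v 0 → ξ ∈ D.domain

/-! Since `⟪η, α_s(a) ξ⟫ = ⟪U (-s) η, a (U (-s) ξ)⟫`, the matrix coefficient is differentiated by
the product rule. The group `U` is commutative, so `U s` maps `dom D` into itself and commutes with
`D` there; the two terms of the product rule therefore combine, through the weak derivative, into
`i ⟪U (-t) η, b (U (-t) ξ)⟫`. As `U` is isometric this is bounded by `‖b‖ ‖ξ‖ ‖η‖`, and the
coefficient vanishes at `s = 0`, so the mean value inequality gives the bound. -/

theorem norm_le_mul_abs_of_hasDerivAt {F : Type*} [NormedAddCommGroup F] [NormedSpace ℝ F]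
    {f f' : ℝ → F} {C : ℝ} (hf : ∀ t, HasDerivAt f (f' t) t) (hC : ∀ t, ‖f' t‖ ≤ C)
    (h0 : f 0 = 0) (t : ℝ) : ‖f t‖ ≤ C * |t| := by
  simpa [h0] using convex_univ.norm_image_sub_le_of_norm_hasDerivWithin_le
    (fun x _ => (hf x).hasDerivWithinAt) (fun x _ => hC x)
    (Set.mem_univ 0) (Set.mem_univ t)

section StoneGroup

variable {E : Type*} [NormedAddCommGroup E] [InnerProductSpace ℂ E]
  {D : E →ₗ.[ℂ] E} {U : ℝ → E →L[ℂ] E}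

theorem IsWeakDeriv.inner_apply {a b : E →L[ℂ] E} (hw : IsWeakDeriv D a b) (ξ η : D.domain) :
    ⟪(η : E), b ξ⟫ = ⟪D η, a ξ⟫ - ⟪(η : E), a (D ξ)⟫ := by
  rw [← inner_conj_symm, hw, map_sub, inner_conj_symm, inner_conj_symm]

namespace IsStoneGroupOf

variable (hU : IsStoneGroupOf D U)
include hU

theorem apply_apply (s t : ℝ) (x : E) : U s (U t x) = U (s + t) x := by
  rw [hU.map_add, ContinuousLinearMap.comp_apply]

theorem apply_comm (s t : ℝ) (x : E) : U s (U t x) = U t (U s x) := by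
  rw [hU.apply_apply, hU.apply_apply, add_comm]

theorem apply_apply_neg (t : ℝ) (x : E) : U t (U (-t) x) = x := by
  rw [hU.apply_apply, add_neg_cancel, hU.map_zero, one_apply_eq_self]

theorem inner_map_map (t : ℝ) (x y : E) : ⟪U t x, U t y⟫ = ⟪x, y⟫ :=
  (⟨(U t).toLinearMap, hU.isometry t⟩ : E →ₗᵢ[ℂ] E).inner_map_map x y

theorem hasDerivAt_apply_apply_zero (ξ : D.domain) (t : ℝ) :
    HasDerivAt (fun r : ℝ => U r (U t (ξ : E))) (Complex.I • U t (D ξ)) 0 := by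
  simp_rw [hU.apply_comm _ t, ← map_smul]
  exact ((U t).restrictScalars ℝ).hasFDerivAt.comp_hasDerivAt 0 (hU.hasDerivAt ξ)

theorem apply_mem_domain (ξ : D.domain) (t : ℝ) : U t (ξ : E) ∈ D.domain :=
  hU.mem_domain _ _ (hU.hasDerivAt_apply_apply_zero ξ t)

theorem map_apply (ξ : D.domain) (t : ℝ) :
    D ⟨U t ξ, hU.apply_mem_domain ξ t⟩ = U t (D ξ) := by
  have h := (hU.hasDerivAt ⟨U t ξ, hU.apply_mem_domain ξ t⟩).unique
    (hU.hasDerivAt_apply_apply_zero ξ t)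
  exact smul_right_injective E Complex.I_ne_zero h

theorem hasDerivAt_apply (ξ : D.domain) (t : ℝ) :
    HasDerivAt (fun s : ℝ => U s (ξ : E)) (Complex.I • U t (D ξ)) t := by
  have h := HasDerivAt.comp_sub_const t t (by simpa using hU.hasDerivAt_apply_apply_zero ξ t)
  simpa only [hU.apply_apply, sub_add_cancel] using h

theorem inner_conjAd_apply (a : E →L[ℂ] E) (t : ℝ) (x y : E) :
    ⟪y, conjAd U t a x⟫ = ⟪U (-t) y, a (U (-t) x)⟫ := by
  rw [← hU.inner_map_map t (U (-t) y), hU.apply_apply_neg]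
  rfl

theorem norm_inner_map_apply_map_le (b : E →L[ℂ] E) (t : ℝ) (x y : E) :
    ‖⟪U t y, b (U t x)⟫‖ ≤ ‖b‖ * ‖x‖ * ‖y‖ :=
  calc ‖⟪U t y, b (U t x)⟫‖ ≤ ‖U t y‖ * ‖b (U t x)‖ := norm_inner_le_norm _ _
    _ ≤ ‖y‖ * (‖b‖ * ‖x‖) := by
      rw [hU.isometry, ← hU.isometry t x]
      gcongr
      exact b.le_opNorm _
    _ = ‖b‖ * ‖x‖ * ‖y‖ := mul_comm _ _

theorem hasDerivAt_inner_map_apply_map {a b : E →L[ℂ] E} (hw : IsWeakDeriv D a b)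
    (ξ η : D.domain) (t : ℝ) :
    HasDerivAt (fun s : ℝ => ⟪U s (η : E), a (U s ξ)⟫)
      (-(Complex.I * ⟪U t (η : E), b (U t ξ)⟫)) t := by
  have hξ := ((a.restrictScalars ℝ).hasFDerivAt).comp_hasDerivAt t (hU.hasDerivAt_apply ξ t)
  refine ((hU.hasDerivAt_apply η t).inner ℂ hξ).congr_deriv ?_
  have hw' := hw.inner_apply ⟨_, hU.apply_mem_domain ξ t⟩ ⟨_, hU.apply_mem_domain η t⟩
  rw [hU.map_apply, hU.map_apply] at hw'
  simp only [Function.comp_apply, ContinuousLinearMap.coe_restrictScalars', map_smul,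
    inner_smul_left, inner_smul_right, Complex.conj_I, hw']
  ring

end IsStoneGroupOf

end StoneGroup

theorem matrix_coefficient_deriv_and_bound_general
    (D : H →ₗ.[ℂ] H)
    (U : ℝ → H →L[ℂ] H) (hU : IsStoneGroupOf D U)
    (a b : H →L[ℂ] H) (hw : IsWeakDeriv D a b) (ξ η : D.domain) :
    (∀ t : ℝ, HasDerivAt
        (fun s : ℝ => ⟪(η : H), (conjAd U s a) (ξ : H) - a (ξ : H)⟫)
        (Complex.I * ⟪U (-t) (η : H), b (U (-t) (ξ : H))⟫) t) ∧
    ∀ t : ℝ, ‖(⟪(η : H), (conjAd U t a) (ξ : H) - a (ξ : H)⟫ : ℂ)‖ ≤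
      |t| * ‖b‖ * ‖(ξ : H)‖ * ‖(η : H)‖ := by
  have hderiv : ∀ t : ℝ, HasDerivAt
      (fun s : ℝ => ⟪(η : H), (conjAd U s a) (ξ : H) - a (ξ : H)⟫)
      (Complex.I * ⟪U (-t) (η : H), b (U (-t) (ξ : H))⟫) t := fun t => by
    have h := HasDerivAt.comp_const_sub 0 t
      (by simpa using hU.hasDerivAt_inner_map_apply_map hw ξ η (-t))
    simp_rw [inner_sub_right, hU.inner_conjAd_apply]
    simpa using h.sub_const ⟪(η : H), a ξ⟫
  refine ⟨hderiv, fun t => ?_⟩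
  calc ‖⟪(η : H), (conjAd U t a) (ξ : H) - a (ξ : H)⟫‖ ≤ ‖b‖ * ‖(ξ : H)‖ * ‖(η : H)‖ * |t| :=
        norm_le_mul_abs_of_hasDerivAt hderiv
          (fun s => by simpa using hU.norm_inner_map_apply_map_le b (-s) ξ η)
          (by simp [conjAd, hU.map_zero]) t
    _ = |t| * ‖b‖ * ‖(ξ : H)‖ * ‖(η : H)‖ := by ring

/-- For `a` weakly `D`-differentiable and `ξ, η ∈ dom D`, the function
`g(t) = ⟨(α_t(a) − a) ξ, η⟩` is differentiable everywhere with
`g'(t) = i ⟨wD(a) e^{-itD} ξ, e^{-itD} η⟩`, whence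
`|⟨(α_t(a) − a) ξ, η⟩| ≤ |t| ‖wD(a)‖ ‖ξ‖ ‖η‖`. -/
theorem matrix_coefficient_deriv_and_bound
    (D : H →ₗ.[ℂ] H) (hD : IsSelfAdjoint D)
    (U : ℝ → H →L[ℂ] H) (hU : IsStoneGroupOf D U)
    (a b : H →L[ℂ] H) (hw : IsWeakDeriv D a b) (ξ η : D.domain) :
    (∀ t : ℝ, HasDerivAt
        (fun s : ℝ => ⟪(η : H), (conjAd U s a) (ξ : H) - a (ξ : H)⟫)
        (Complex.I * ⟪U (-t) (η : H), b (U (-t) (ξ : H))⟫) t) ∧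
    ∀ t : ℝ, ‖(⟪(η : H), (conjAd U t a) (ξ : H) - a (ξ : H)⟫ : ℂ)‖ ≤
      |t| * ‖b‖ * ‖(ξ : H)‖ * ‖(η : H)‖ :=
  matrix_coefficient_deriv_and_bound_general D U hU a b hw ξ η
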